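/- arXiv:1711.06280 — 3 statements merged into one kernel-verified Lean document; each statement's English description precedes it below -/
import Mathlib

section
/- Suppose 1, θ₁, θ₂ are linearly dependent over ℤ with at least one θⱼ irrational, i.e., there is a nonzero integer vector z = (z₀,z₁,z₂) with z₀ + z₁θ₁ + z₂θ₂ = 0. Then there exists a constant γ > 0 such that for every (η₁,η₂) on the line P = {(x₁,x₂) : z₀ + z₁x₁ + z₂x₂ = 0}, the inequality max_{i=1,2} ‖θᵢ x − ηᵢ‖ < γ/x has infinitely many solutions in positive integers x. -/
/-!
Put `x = 1 + z₂² n` and `t = θ₁ n - (η₁ - θ₁) / z₂²`. For `(η₁, η₂)` on the line,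
`θ₁ x - η₁ = z₂² t` and `θ₂ x - η₂ = -z₀ z₂ n - z₁ z₂ t`, so both distances to the nearest
integer are `O(‖t‖)` while `x = O(n)`. The problem thus reduces to the inhomogeneous
approximation `‖θ₁ n - α‖ < 5 / n`, which has infinitely many solutions when `θ₁` is
irrational: if `p / q` is a fraction in lowest terms with `|q θ₁ - p| < 1 / q`, the `n ∈ [q, 2q)`
with `n p ≡ round (q α) (mod q)` is one. If `θ₁` is irrational then `z₂ ≠ 0`, so swapping the
coordinates if necessary we may assume both.
-/

/-- Distance from a real number to the nearest integer. -/
noncomputable def distNearestInt (t : ℝ) : ℝ := |t - round t|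

open Topology

lemma distNearestInt_le_abs_sub (t : ℝ) (m : ℤ) : distNearestInt t ≤ |t - m| := round_le t m

lemma distNearestInt_intCast_add_intCast_mul_le (k m : ℤ) (t : ℝ) :
    distNearestInt (k + m * t) ≤ |(m : ℝ)| * distNearestInt t :=
  calc distNearestInt (k + m * t) ≤ |k + m * t - ((k + m * round t : ℤ) : ℝ)| :=
        distNearestInt_le_abs_sub _ _
    _ = |(m : ℝ)| * distNearestInt t := by
      rw [distNearestInt, ← abs_mul]; push_cast; ring_nf

lemma Irrational.exists_coprime_abs_mul_sub_lt {ξ : ℝ} (hξ : Irrational ξ) (N : ℕ) :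
    ∃ (p : ℤ) (q : ℕ), N < q ∧ IsCoprime p q ∧ |q * ξ - p| < 1 / q := by
  -- Dirichlet's theorem at a precision below the distance `ε` from `ξ` to the rationals of
  -- denominator at most `N` yields a denominator larger than `N`.
  obtain ⟨ε, hfar, hε⟩ : ∃ ε : ℝ, (∀ r : ℚ, r.den ≤ N → ε ≤ dist ξ r) ∧ 0 < ε :=
    (((hξ.eventually_forall_le_dist_cast_rat_of_den_le N).filter_mono nhdsWithin_le_nhds).and
      self_mem_nhdsWithin).exists (f := 𝓝[>] 0)
  obtain ⟨n, hn⟩ := exists_nat_gt ε⁻¹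
  have hn₀ : 0 < n := by exact_mod_cast (inv_pos.2 hε).trans hn
  obtain ⟨r, hr, hrn⟩ := Real.exists_rat_abs_sub_le_and_den_le ξ hn₀
  have hd : (0 : ℝ) < r.den := by exact_mod_cast r.pos
  have hdn : (r.den : ℝ) ≤ n := by exact_mod_cast hrn
  have hnε : 1 / ((n : ℝ) + 1) < ε := by
    rw [div_lt_iff₀ (by positivity)]
    have := (inv_lt_iff_one_lt_mul₀' hε).1 hn
    nlinarith
  have hscale : |r.den * ξ - r.num| = r.den * |ξ - r| := by
    rw [← abs_of_pos hd, ← abs_mul, abs_of_pos hd, Rat.cast_def]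
    congr 1; field_simp
  have hclose : |r.den * ξ - r.num| ≤ 1 / (n + 1) := by
    rw [hscale]
    calc (r.den : ℝ) * |ξ - r| ≤ r.den * (1 / ((n + 1) * r.den)) := by gcongr
      _ = 1 / (n + 1) := by field_simp
  refine ⟨r.num, r.den, not_le.1 fun hle => (hfar r hle).not_gt ?_,
    Int.isCoprime_iff_gcd_eq_one.2 r.reduced, hclose.trans_lt ?_⟩
  · calc dist ξ r = |ξ - r| := Real.dist_eq _ _
      _ ≤ r.den * |ξ - r| := le_mul_of_one_le_left (abs_nonneg _) (by exact_mod_cast r.pos)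
      _ < ε := by rw [← hscale]; exact hclose.trans_lt hnε
  · gcongr; linarith

lemma exists_nat_mem_Ico_dvd_mul_sub {p : ℤ} {q : ℕ} (hpq : IsCoprime p q) (hq : 0 < q) (m : ℤ) :
    ∃ n : ℕ, q ≤ n ∧ n < 2 * q ∧ (q : ℤ) ∣ n * p - m := by
  obtain ⟨a, b, hab⟩ := hpq
  have hq' : (0 : ℤ) < q := by exact_mod_cast hq
  obtain ⟨s, hs⟩ : ∃ s : ℕ, (s : ℤ) = m * a % q :=
    ⟨_, Int.toNat_of_nonneg (Int.emod_nonneg _ hq'.ne')⟩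
  have hsq : s < q := by have := Int.emod_lt_of_pos (m * a) hq'; omega
  refine ⟨s + q, by omega, by omega, p - m * b - m * a / q * p, ?_⟩
  push_cast
  rw [hs, Int.emod_def]
  linear_combination m * hab

lemma distNearestInt_mul_sub_lt {θ α : ℝ} {p m k : ℤ} {q n : ℕ} (hq : 0 < q) (hqn : q ≤ n)
    (hn : n < 2 * q) (happrox : |q * θ - p| < 1 / q) (hm : |q * α - m| ≤ 1 / 2)
    (hk : n * p - m = q * k) : distNearestInt (θ * n - α) < 5 / n := by
  have hq' : (0 : ℝ) < q := by exact_mod_cast hq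
  have hn' : (n : ℝ) < 2 * q := by exact_mod_cast hn
  have hqn' : (q : ℝ) ≤ n := by exact_mod_cast hqn
  have hk' : (n * p - m : ℝ) = q * k := by exact_mod_cast hk
  have key : θ * n - α - k = (n * (q * θ - p) - (q * α - m)) / q := by
    field_simp; linear_combination hk'
  calc distNearestInt (θ * n - α) ≤ |θ * n - α - k| := distNearestInt_le_abs_sub _ _
    _ ≤ (n * |q * θ - p| + |q * α - m|) / q := by
      rw [key, abs_div, abs_of_pos hq']
      gcongr
      exact (abs_sub _ _).trans_eq (by rw [abs_mul, Nat.abs_cast])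
    _ < (n * (1 / q) + 1 / 2) / q := by
      gcongr ?_ / _
      exact add_lt_add_of_lt_of_le (mul_lt_mul_of_pos_left happrox (by linarith)) hm
    _ < 5 / n := by
      rw [div_lt_div_iff₀ hq' (by linarith)]
      field_simp
      nlinarith

theorem Irrational.infinite_setOf_distNearestInt_mul_sub_lt {θ : ℝ} (hθ : Irrational θ) (α : ℝ) :
    {n : ℕ | 0 < n ∧ distNearestInt (θ * n - α) < 5 / n}.Infinite := by
  refine Set.infinite_of_forall_exists_gt fun N => ?_
  obtain ⟨p, q, hNq, hpq, happrox⟩ := hθ.exists_coprime_abs_mul_sub_lt N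
  have hq : 0 < q := (Nat.zero_le N).trans_lt hNq
  obtain ⟨n, hqn, hn, k, hk⟩ := exists_nat_mem_Ico_dvd_mul_sub hpq hq (round (q * α))
  exact ⟨n, ⟨hq.trans_le hqn,
    distNearestInt_mul_sub_lt hq hqn hn happrox (abs_sub_round _) hk⟩, hNq.trans_le hqn⟩

lemma max_distNearestInt_le_of_mem_line {θ₁ θ₂ η₁ η₂ : ℝ} {z₀ z₁ z₂ : ℤ} (hz₂ : z₂ ≠ 0)
    (hrel : (z₀ : ℝ) + z₁ * θ₁ + z₂ * θ₂ = 0) (hη : (z₀ : ℝ) + z₁ * η₁ + z₂ * η₂ = 0) (n : ℕ) :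
    max (distNearestInt (θ₁ * (1 + z₂ ^ 2 * n) - η₁))
        (distNearestInt (θ₂ * (1 + z₂ ^ 2 * n) - η₂)) ≤
      (z₂ ^ 2 + |(z₁ * z₂ : ℝ)|) * distNearestInt (θ₁ * n - (η₁ - θ₁) / z₂ ^ 2) := by
  set t := θ₁ * n - (η₁ - θ₁) / z₂ ^ 2
  have hz₂' : (z₂ : ℝ) ≠ 0 := by exact_mod_cast hz₂
  have e₁ : θ₁ * (1 + z₂ ^ 2 * n) - η₁ = ((0 : ℤ) : ℝ) + ((z₂ ^ 2 : ℤ) : ℝ) * t := by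
    simp only [t]; push_cast; field_simp; ring
  have e₂ : θ₂ * (1 + z₂ ^ 2 * n) - η₂ =
      ((-(z₀ * z₂ * n) : ℤ) : ℝ) + ((-(z₁ * z₂) : ℤ) : ℝ) * t := by
    simp only [t]; push_cast
    apply mul_left_cancel₀ hz₂'
    field_simp
    linear_combination (1 + z₂ ^ 2 * n : ℝ) * hrel - hη
  rw [e₁, e₂]
  refine max_le ((distNearestInt_intCast_add_intCast_mul_le _ _ _).trans ?_)
    ((distNearestInt_intCast_add_intCast_mul_le _ _ _).trans ?_) <;>
    refine mul_le_mul_of_nonneg_right ?_ (abs_nonneg _) <;> push_cast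
  · rw [abs_sq]; exact le_add_of_nonneg_right (abs_nonneg _)
  · rw [abs_neg]; exact le_add_of_nonneg_left (sq_nonneg _)

theorem exists_pos_infinite_setOf_max_distNearestInt_lt {θ₁ θ₂ : ℝ} {z₀ z₁ z₂ : ℤ}
    (hz₂ : z₂ ≠ 0) (hθ₁ : Irrational θ₁) (hrel : (z₀ : ℝ) + z₁ * θ₁ + z₂ * θ₂ = 0) :
    ∃ γ : ℝ, 0 < γ ∧ ∀ η₁ η₂ : ℝ, (z₀ : ℝ) + z₁ * η₁ + z₂ * η₂ = 0 →
      {x : ℕ | 0 < x ∧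
        max (distNearestInt (θ₁ * x - η₁)) (distNearestInt (θ₂ * x - η₂)) < γ / x}.Infinite := by
  set K : ℝ := z₂ ^ 2 + |(z₁ * z₂ : ℝ)|
  have hK : 1 ≤ K := by
    have hz₂_sq : (1 : ℤ) ≤ z₂ ^ 2 := by rw [← sq_abs]; exact one_le_pow₀ (Int.one_le_abs hz₂)
    exact (show (1 : ℝ) ≤ z₂ ^ 2 by exact_mod_cast hz₂_sq).trans
      (le_add_of_nonneg_right (abs_nonneg _))
  refine ⟨5 * K * (1 + K), by positivity, fun η₁ η₂ hη => ?_⟩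
  have hinj : Function.Injective fun n : ℕ => 1 + z₂.natAbs ^ 2 * n := fun a b hab => by
    simpa [hz₂] using hab
  refine ((hθ₁.infinite_setOf_distNearestInt_mul_sub_lt ((η₁ - θ₁) / z₂ ^ 2)).image
    hinj.injOn).mono ?_
  rintro _ ⟨n, ⟨hn, hδ⟩, rfl⟩
  have hx : ((1 + z₂.natAbs ^ 2 * n : ℕ) : ℝ) = 1 + z₂ ^ 2 * n := by
    push_cast [Nat.cast_natAbs, sq_abs]; rfl
  have hn' : (1 : ℝ) ≤ n := by exact_mod_cast hn
  refine ⟨by positivity, ?_⟩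
  rw [hx]
  calc _ ≤ K * distNearestInt (θ₁ * n - (η₁ - θ₁) / z₂ ^ 2) :=
        max_distNearestInt_le_of_mem_line hz₂ hrel hη n
    _ < K * (5 / n) := by gcongr
    _ ≤ 5 * K * (1 + K) / (1 + z₂ ^ 2 * n) := by
      rw [mul_div_assoc', div_le_div_iff₀ (by positivity) (by positivity)]
      have hz₂K : (z₂ : ℝ) ^ 2 ≤ K := le_add_of_nonneg_right (abs_nonneg _)
      have hx_le : 1 + z₂ ^ 2 * n ≤ (1 + K) * n := by nlinarith
      nlinarith [mul_le_mul_of_nonneg_left hx_le (by positivity : (0 : ℝ) ≤ 5 * K)]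

lemma ne_zero_of_irrational_of_add_mul_add_mul_eq_zero {θ₁ θ₂ : ℝ} {z₀ z₁ z₂ : ℤ}
    (hz : ¬(z₀ = 0 ∧ z₁ = 0 ∧ z₂ = 0)) (hrel : (z₀ : ℝ) + z₁ * θ₁ + z₂ * θ₂ = 0)
    (hθ₁ : Irrational θ₁) : z₂ ≠ 0 := by
  rintro rfl
  rcases eq_or_ne z₁ 0 with rfl | hz₁
  · exact hz ⟨by simpa using hrel, rfl, rfl⟩
  · exact ((hθ₁.intCast_mul hz₁).intCast_add z₀).ne_zero (by simpa using hrel)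

theorem stmt2 (θ₁ θ₂ : ℝ) (z₀ z₁ z₂ : ℤ) (hz : ¬(z₀ = 0 ∧ z₁ = 0 ∧ z₂ = 0))
    (hrel : (z₀ : ℝ) + z₁ * θ₁ + z₂ * θ₂ = 0)
    (hirr : Irrational θ₁ ∨ Irrational θ₂) :
    ∃ γ : ℝ, 0 < γ ∧ ∀ η₁ η₂ : ℝ, (z₀ : ℝ) + z₁ * η₁ + z₂ * η₂ = 0 →
      {x : ℕ | 0 < x ∧
        max (distNearestInt (θ₁ * x - η₁)) (distNearestInt (θ₂ * x - η₂)) < γ / x}.Infinite := by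
  rcases hirr with hθ₁ | hθ₂
  · exact exists_pos_infinite_setOf_max_distNearestInt_lt
      (ne_zero_of_irrational_of_add_mul_add_mul_eq_zero hz hrel hθ₁) hθ₁ hrel
  · have hz' : ¬(z₀ = 0 ∧ z₂ = 0 ∧ z₁ = 0) := by tauto
    have hrel' : (z₀ : ℝ) + z₂ * θ₂ + z₁ * θ₁ = 0 := by linarith
    obtain ⟨γ, hγ, H⟩ := exists_pos_infinite_setOf_max_distNearestInt_lt
      (ne_zero_of_irrational_of_add_mul_add_mul_eq_zero hz' hrel' hθ₂) hθ₂ hrel'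
    refine ⟨γ, hγ, fun η₁ η₂ hη => ?_⟩
    simpa only [max_comm] using H η₂ η₁ (by linarith)
end

section
/- Let θ = (θ₁,θ₂) be such that 1, θ₁, θ₂ are linearly dependent over ℤ with at least one θⱼ irrational, and let P ⊂ ℝ² be the corresponding rational line through θ (defined by the integer relation). Then the set Bad_θ = {(η₁,η₂) : inf_{x∈ℕ} x^{1/2} max_{i=1,2} ‖x θᵢ − ηᵢ‖ > 0} has empty intersection with P. -/
lemma dni_nonneg (t : ℝ) : 0 ≤ distNearestInt t := abs_nonneg _

lemma dni_le (t : ℝ) (n : ℤ) : distNearestInt t ≤ |t - n| := round_le t n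

lemma not_irrational_of_int_relation (a b : ℤ) (hb : b ≠ 0) (x : ℝ)
    (h : (a : ℝ) + b * x = 0) : ¬ Irrational x := by
  have hbR : (b : ℝ) ≠ 0 := Int.cast_ne_zero.mpr hb
  have hx : x = ((-a / b : ℚ) : ℝ) := by
    push_cast
    field_simp
    linarith
  rw [hx]
  exact Rat.not_irrational _

lemma finite_bounded_rats (B : ℕ) (C : ℝ) :
    {r : ℚ | r.den ≤ B ∧ |(r : ℝ)| ≤ C}.Finite := by
  have hsub : {r : ℚ | r.den ≤ B ∧ |(r : ℝ)| ≤ C} ⊆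
      (fun p : ℤ × ℕ => (p.1 : ℚ) / (p.2 : ℚ)) ''
        (Set.Icc (-⌈C * B⌉) ⌈C * B⌉ ×ˢ Set.Iic B) := by
    rintro r ⟨hden, habs⟩
    refine ⟨(r.num, r.den), ⟨?_, hden⟩, by simp [Rat.num_div_den]⟩
    have h1 : |(r.num : ℝ)| = |(r : ℝ)| * (r.den : ℝ) := by
      rw [← abs_of_nonneg (show (0:ℝ) ≤ (r.den:ℝ) from by positivity), ← abs_mul]
      congr 1
      rw [Rat.cast_def]
      field_simp
    have hC : 0 ≤ C := le_trans (abs_nonneg _) habs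
    have hdB : (r.den : ℝ) ≤ (B : ℝ) := by exact_mod_cast hden
    have hnum : |(r.num : ℝ)| ≤ C * B :=
      h1 ▸ mul_le_mul habs hdB (by positivity) hC
    have hc : |(r.num : ℝ)| ≤ ((⌈C * B⌉ : ℤ) : ℝ) := hnum.trans (Int.le_ceil _)
    have habs' : |r.num| ≤ ⌈C * B⌉ := by exact_mod_cast hc
    have := abs_le.mp habs'
    rw [Set.mem_Icc]
    exact this
  exact Set.Finite.subset (Set.Finite.image _ ((Set.finite_Icc _ _).prod (Set.finite_Iic _))) hsub

lemma exists_good_rat_large_den {α : ℝ} (hα : Irrational α) (B : ℕ) :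
    ∃ r : ℚ, |α - r| < 1 / (r.den : ℝ) ^ 2 ∧ B < r.den := by
  have hinf := Real.infinite_rat_abs_sub_lt_one_div_den_sq_of_irrational hα
  have hfin := finite_bounded_rats B (|α| + 1)
  obtain ⟨r, hrS, hrT⟩ := (hinf.diff hfin).nonempty
  refine ⟨r, hrS, ?_⟩
  by_contra hle
  push_neg at hle
  apply hrT
  refine ⟨hle, ?_⟩
  have hd1 : (1 : ℝ) ≤ (r.den : ℝ) := by exact_mod_cast r.pos
  have h1 : |α - r| < 1 := lt_of_lt_of_le hrS (by
    rw [div_le_one (by positivity)]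
    nlinarith)
  have h2 : |(r:ℝ)| - |α| ≤ |α - r| := by
    have := abs_sub_abs_le_abs_sub (r : ℝ) α
    rw [abs_sub_comm] at this
    linarith
  linarith
/-- Key 1D lemma: inhomogeneous approximation beating exponent 1/2. -/
lemma exists_good_approx {α : ℝ} (hα : Irrational α) (γ : ℝ) {ε : ℝ} (hε : 0 < ε) :
    ∃ m : ℕ, 0 < m ∧ Real.sqrt m * distNearestInt (α * m - γ) < ε := by
  obtain ⟨r, hr, hB⟩ := exists_good_rat_large_den hα ⌈16 / ε ^ 2⌉₊
  set q : ℕ := r.den with hqdef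
  set p : ℤ := r.num with hpdef
  have hq0 : 0 < q := r.pos
  have hqR : (0:ℝ) < (q:ℝ) := by exact_mod_cast hq0
  have hqbig : 16 / ε ^ 2 < (q : ℝ) := by
    calc 16 / ε ^ 2 ≤ (⌈16 / ε ^ 2⌉₊ : ℝ) := Nat.le_ceil _
      _ < (q : ℝ) := by exact_mod_cast hB
  set δ : ℝ := (q:ℝ) * α - (p:ℝ) with hδdef
  have hrcast : (r : ℝ) = (p:ℝ) / (q:ℝ) := by rw [Rat.cast_def]
  have hδ : |δ| < 1 / (q:ℝ) := by
    have h0 : |α - (p:ℝ)/(q:ℝ)| < 1 / (q:ℝ)^2 := by rw [← hrcast]; exact hr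
    have h2 : δ = (q:ℝ) * (α - (p:ℝ)/(q:ℝ)) := by rw [hδdef]; field_simp
    calc |δ| = (q:ℝ) * |α - (p:ℝ)/(q:ℝ)| := by
          rw [h2, abs_mul, abs_of_pos hqR]
      _ < (q:ℝ) * (1 / (q:ℝ)^2) := mul_lt_mul_of_pos_left h0 hqR
      _ = 1 / (q:ℝ) := by field_simp
  have hcop : IsCoprime p (q : ℤ) := by
    rw [Int.isCoprime_iff_gcd_eq_one]
    simpa [Int.gcd, hpdef, hqdef] using r.reduced
  obtain ⟨u, v, huv⟩ := hcop
  set j : ℤ := round ((q:ℝ) * γ) with hjdef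
  set t : ℤ := (j * u) / q with htdef
  set m₀ : ℤ := (j * u) % q with hm₀def
  have hm₀0 : 0 ≤ m₀ := Int.emod_nonneg _ (by exact_mod_cast hq0.ne')
  have hm₀lt : m₀ < q := Int.emod_lt_of_pos _ (by exact_mod_cast hq0)
  have hm₀eq : m₀ = j * u - q * t := by rw [hm₀def, htdef, Int.emod_def]
  set k : ℤ := -(j * v) - t * p with hkdef
  have hkey : m₀ * p = q * k + j := by rw [hm₀eq, hkdef]; linear_combination j * huv
  set m : ℕ := m₀.toNat + q with hmdef
  have hm0 : 0 < m := by omega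
  have hmZ : (m:ℤ) = m₀ + q := by omega
  have hmcast : (m : ℝ) = (m₀ : ℝ) + (q : ℝ) := by exact_mod_cast hmZ
  have hm₀R0 : (0:ℝ) ≤ (m₀:ℝ) := by exact_mod_cast hm₀0
  have hm₀Rlt : (m₀:ℝ) < (q:ℝ) := by exact_mod_cast hm₀lt
  refine ⟨m, hm0, ?_⟩
  have hkeyR : (m₀:ℝ) * (p:ℝ) = (q:ℝ) * (k:ℝ) + (j:ℝ) := by exact_mod_cast hkey
  have halg : α * (m:ℝ) - γ - ((k + p : ℤ):ℝ) =
      ((j:ℝ)/(q:ℝ) - γ) + (m₀:ℝ) * δ / (q:ℝ) + δ := by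
    rw [hδdef]
    push_cast
    rw [hmcast]
    field_simp
    linear_combination hkeyR
  -- distance estimate
  have h1 : |(j:ℝ)/(q:ℝ) - γ| ≤ 1/(2*(q:ℝ)) := by
    have hr2 : |(q:ℝ)*γ - j| ≤ 1/2 := abs_sub_round _
    have he : (j:ℝ)/(q:ℝ) - γ = -(((q:ℝ)*γ - j)/(q:ℝ)) := by field_simp; ring
    rw [he, abs_neg, abs_div, abs_of_pos hqR, div_le_div_iff₀ hqR (by positivity)]
    nlinarith
  have h3 : |(m₀:ℝ)*δ/(q:ℝ)| ≤ |δ| := by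
    rw [abs_div, abs_mul, abs_of_nonneg hm₀R0, abs_of_pos hqR, div_le_iff₀ hqR]
    nlinarith [abs_nonneg δ]
  have hest : distNearestInt (α * m - γ) < 5/(2*(q:ℝ)) := by
    calc distNearestInt (α * m - γ) ≤ |α * (m:ℝ) - γ - ((k + p : ℤ):ℝ)| := dni_le _ _
      _ = |((j:ℝ)/(q:ℝ) - γ) + (m₀:ℝ) * δ / (q:ℝ) + δ| := by rw [halg]
      _ ≤ |(j:ℝ)/(q:ℝ) - γ| + |(m₀:ℝ)*δ/(q:ℝ)| + |δ| :=
          (abs_add_le _ _).trans (by gcongr; exact abs_add_le _ _)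
      _ < 1/(2*(q:ℝ)) + 1/(q:ℝ) + 1/(q:ℝ) := by
          have := hδ
          linarith
      _ = 5/(2*(q:ℝ)) := by field_simp; ring
  have hmle : (m:ℝ) ≤ 2*(q:ℝ) := by rw [hmcast]; linarith
  have hs : Real.sqrt m ≤ Real.sqrt (2*(q:ℝ)) := Real.sqrt_le_sqrt hmle
  have hq16 : 16 < (q:ℝ) * ε^2 := by
    rw [div_lt_iff₀ (by positivity)] at hqbig
    linarith
  have hsq : Real.sqrt (2*(q:ℝ)) < 2*(q:ℝ)*ε/5 := by
    rw [Real.sqrt_lt' (by positivity)]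
    nlinarith
  calc Real.sqrt m * distNearestInt (α * m - γ)
      ≤ Real.sqrt (2*(q:ℝ)) * (5/(2*(q:ℝ))) :=
        mul_le_mul hs hest.le (dni_nonneg _) (Real.sqrt_nonneg _)
    _ < (2*(q:ℝ)*ε/5) * (5/(2*(q:ℝ))) := by
        apply mul_lt_mul_of_pos_right hsq (by positivity)
    _ = ε := by field_simp
set_option maxHeartbeats 1000000

/-- Main construction on the line, assuming `z₂ ≠ 0` and `θ₁` irrational. -/
lemma exists_good_pair (θ₁ θ₂ η₁ η₂ : ℝ) (z₀ z₁ z₂ : ℤ) (hz₂ : z₂ ≠ 0)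
    (hirr : Irrational θ₁)
    (hrel : (z₀ : ℝ) + z₁ * θ₁ + z₂ * θ₂ = 0)
    (hrelη : (z₀ : ℝ) + z₁ * η₁ + z₂ * η₂ = 0)
    {ε : ℝ} (hε : 0 < ε) :
    ∃ x : ℕ+, Real.sqrt x *
      max (distNearestInt (θ₁ * x - η₁)) (distNearestInt (θ₂ * x - η₂)) < ε := by
  have hz₂R : (z₂ : ℝ) ≠ 0 := Int.cast_ne_zero.mpr hz₂
  set c : ℕ := (z₂ * z₂).toNat with hcdef
  have hcZ : (c : ℤ) = z₂ * z₂ := Int.toNat_of_nonneg (mul_self_nonneg z₂)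
  have hc0 : 0 < c := by
    have h : z₂ * z₂ ≠ 0 := mul_ne_zero hz₂ hz₂
    have h2 : (0:ℤ) ≤ z₂ * z₂ := mul_self_nonneg z₂
    omega
  have hcR : (c : ℝ) = (z₂:ℝ) * (z₂:ℝ) := by exact_mod_cast hcZ
  have hcR0 : (0:ℝ) < (c:ℝ) := by exact_mod_cast hc0
  set K : ℝ := |(z₁:ℝ)| + |(z₂:ℝ)| with hKdef
  have hK0 : 0 < K := by
    have : 0 < |(z₂:ℝ)| := abs_pos.mpr hz₂R
    have := abs_nonneg (z₁:ℝ)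
    linarith
  set C : ℝ := Real.sqrt (1 + (c:ℝ)) * K with hCdef
  have hC0 : 0 < C := mul_pos (Real.sqrt_pos.mpr (by linarith)) hK0
  have hα : Irrational ((z₂:ℝ) * θ₁) := hirr.intCast_mul hz₂
  obtain ⟨m, hm0, hkey⟩ := exists_good_approx hα ((η₁ - θ₁)/(z₂:ℝ)) (div_pos hε hC0)
  have hm1 : (1:ℝ) ≤ (m:ℝ) := by exact_mod_cast hm0
  have hxpos : 0 < 1 + c * m := by omega
  set x : ℕ+ := ⟨1 + c * m, hxpos⟩ with hxdef
  refine ⟨x, ?_⟩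
  set n : ℤ := round ((z₂:ℝ) * θ₁ * m - (η₁ - θ₁)/(z₂:ℝ)) with hndef
  set A : ℝ := (z₂:ℝ) * θ₁ * m - (η₁ - θ₁)/(z₂:ℝ) - n with hAdef
  have hAabs : |A| = distNearestInt ((z₂:ℝ) * θ₁ * m - (η₁ - θ₁)/(z₂:ℝ)) := rfl
  have hxval : ((x : ℕ) : ℝ) = 1 + (c:ℝ) * (m:ℝ) := by
    have : (x : ℕ) = 1 + c * m := rfl
    rw [this]
    push_cast
    ring
  rw [hxval]
  have hD₁ : θ₁ * (1 + (c:ℝ) * m) - η₁ = (z₂:ℝ) * ((n:ℝ) + A) := by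
    rw [hAdef, hcR]
    field_simp
    ring
  have hA' : (z₂:ℝ) * A = (z₂:ℝ)*(z₂:ℝ)*θ₁*(m:ℝ) - (η₁ - θ₁) - (z₂:ℝ)*(n:ℝ) := by
    rw [hAdef]
    field_simp
  have hD₂ : θ₂ * (1 + (c:ℝ) * m) - η₂ = ((-(z₀ * z₂ * (m:ℤ)) - z₁ * n : ℤ):ℝ) - (z₁:ℝ) * A := by
    have hmul : (z₂:ℝ) * (θ₂ * (1 + (c:ℝ) * m) - η₂) =
        (z₂:ℝ) * (((-(z₀ * z₂ * (m:ℤ)) - z₁ * n : ℤ):ℝ) - (z₁:ℝ) * A) := by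
      push_cast
      rw [hcR]
      linear_combination (1 + (z₂:ℝ) * (z₂:ℝ) * (m:ℝ)) * hrel - hrelη + (z₁:ℝ) * hA'
    exact mul_left_cancel₀ hz₂R hmul
  have hb1 : distNearestInt (θ₁ * (1 + (c:ℝ) * m) - η₁) ≤ |(z₂:ℝ)| * |A| := by
    calc distNearestInt (θ₁ * (1 + (c:ℝ) * m) - η₁)
        ≤ |θ₁ * (1 + (c:ℝ) * m) - η₁ - ((z₂ * n : ℤ):ℝ)| := dni_le _ _
      _ = |(z₂:ℝ)| * |A| := by
          rw [hD₁, ← abs_mul]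
          congr 1
          push_cast
          ring
  have hb2 : distNearestInt (θ₂ * (1 + (c:ℝ) * m) - η₂) ≤ |(z₁:ℝ)| * |A| := by
    calc distNearestInt (θ₂ * (1 + (c:ℝ) * m) - η₂)
        ≤ |θ₂ * (1 + (c:ℝ) * m) - η₂ - ((-(z₀ * z₂ * (m:ℤ)) - z₁ * n : ℤ):ℝ)| := dni_le _ _
      _ = |(z₁:ℝ)| * |A| := by
          rw [hD₂, ← abs_mul, ← abs_neg]
          congr 1
          ring
  have hmax : max (distNearestInt (θ₁ * (1 + (c:ℝ) * m) - η₁))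
      (distNearestInt (θ₂ * (1 + (c:ℝ) * m) - η₂)) ≤ K * |A| := by
    have hA0 : 0 ≤ |A| := abs_nonneg _
    apply max_le
    · calc _ ≤ |(z₂:ℝ)| * |A| := hb1
        _ ≤ K * |A| := by rw [hKdef]; nlinarith [abs_nonneg (z₁:ℝ)]
    · calc _ ≤ |(z₁:ℝ)| * |A| := hb2
        _ ≤ K * |A| := by rw [hKdef]; nlinarith [abs_nonneg (z₂:ℝ)]
  have hsx : Real.sqrt (1 + (c:ℝ) * m) ≤ Real.sqrt (1 + (c:ℝ)) * Real.sqrt m := by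
    rw [← Real.sqrt_mul (by linarith)]
    apply Real.sqrt_le_sqrt
    nlinarith
  calc Real.sqrt (1 + (c:ℝ) * m) *
        max (distNearestInt (θ₁ * (1 + (c:ℝ) * m) - η₁))
          (distNearestInt (θ₂ * (1 + (c:ℝ) * m) - η₂))
      ≤ (Real.sqrt (1 + (c:ℝ)) * Real.sqrt m) * (K * |A|) := by
        apply mul_le_mul hsx hmax
        · exact le_max_of_le_left (dni_nonneg _)
        · positivity
    _ = C * (Real.sqrt m * |A|) := by rw [hCdef]; ring
    _ < C * (ε / C) := by
        apply mul_lt_mul_of_pos_left _ hC0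
        rw [hAabs]
        exact hkey
    _ = ε := by field_simp
theorem stmt3 (θ₁ θ₂ : ℝ) (z₀ z₁ z₂ : ℤ) (hz : ¬(z₀ = 0 ∧ z₁ = 0 ∧ z₂ = 0))
    (hrel : (z₀ : ℝ) + z₁ * θ₁ + z₂ * θ₂ = 0)
    (hirr : Irrational θ₁ ∨ Irrational θ₂) :
    ∀ η₁ η₂ : ℝ, (z₀ : ℝ) + z₁ * η₁ + z₂ * η₂ = 0 →
      ¬ (0 < ⨅ x : ℕ+, Real.sqrt x *
          max (distNearestInt (θ₁ * x - η₁)) (distNearestInt (θ₂ * x - η₂))) := by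
  intro η₁ η₂ hη h
  -- the two usable configurations
  have hcases : (z₂ ≠ 0 ∧ Irrational θ₁) ∨ (z₁ ≠ 0 ∧ Irrational θ₂) := by
    by_cases h2 : z₂ = 0
    · have h1 : z₁ ≠ 0 := by
        intro h1
        apply hz
        refine ⟨?_, h1, h2⟩
        have : (z₀ : ℝ) = 0 := by rw [h1, h2] at hrel; push_cast at hrel; linarith
        exact_mod_cast this
      have hθ₁rat : ¬ Irrational θ₁ := by
        apply not_irrational_of_int_relation z₀ z₁ h1
        rw [h2] at hrel; push_cast at hrel; linarith
      exact Or.inr ⟨h1, hirr.resolve_left hθ₁rat⟩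
    · by_cases hi1 : Irrational θ₁
      · exact Or.inl ⟨h2, hi1⟩
      · have hθ₂ : Irrational θ₂ := hirr.resolve_left hi1
        have h1 : z₁ ≠ 0 := by
          intro h1
          apply not_irrational_of_int_relation z₀ z₂ h2 θ₂ ?_ hθ₂
          rw [h1] at hrel; push_cast at hrel; linarith
        exact Or.inr ⟨h1, hθ₂⟩
  -- the function is bounded below by 0
  have hbdd : BddBelow (Set.range fun x : ℕ+ => Real.sqrt x *
      max (distNearestInt (θ₁ * x - η₁)) (distNearestInt (θ₂ * x - η₂))) := by
    refine ⟨0, ?_⟩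
    rintro y ⟨x, rfl⟩
    exact mul_nonneg (Real.sqrt_nonneg _) (le_max_of_le_left (dni_nonneg _))
  -- get a point beating the infimum
  obtain ⟨x, hx⟩ : ∃ x : ℕ+, Real.sqrt x *
      max (distNearestInt (θ₁ * x - η₁)) (distNearestInt (θ₂ * x - η₂)) <
      ⨅ x : ℕ+, Real.sqrt x *
        max (distNearestInt (θ₁ * x - η₁)) (distNearestInt (θ₂ * x - η₂)) := by
    rcases hcases with ⟨hz2, hi⟩ | ⟨hz1, hi⟩
    · exact exists_good_pair θ₁ θ₂ η₁ η₂ z₀ z₁ z₂ hz2 hi hrel hη h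
    · obtain ⟨x, hx⟩ := exists_good_pair θ₂ θ₁ η₂ η₁ z₀ z₂ z₁ hz1 hi
        (by linarith) (by linarith) h
      exact ⟨x, by rwa [max_comm] at hx⟩
  exact absurd (ciInf_le hbdd x) (not_le.mpr hx)
end

section
/- Let Λ be a rank-2 lattice in a 2-dimensional plane π ⊂ ℝ³ with covolume (determinant) d, let v ∈ Λ be a nonzero vector, and let σ = min over w ∈ Λ \ ℝv of dist(w, ℝv). Then the rectangle Π = {t·v + r·e : 0 ≤ t ≤ 1, |r| ≤ σ}, where e is a unit vector in π orthogonal to v, contains a fundamental domain of Λ; in particular, every translate of Π by a point of π contains a lattice point of Λ. -/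
/-!
Write every point `u` of the plane as `x • v + ⟪e, u⟫ • e`; its height `⟪e, u⟫` is its signed
distance to the line `ℝ ∙ v`. The heights of the lattice points form a subgroup of `ℝ`; reducing
a lattice point modulo `v` keeps its height and moves it into a bounded window, so discreteness
of `Λ` makes this subgroup discrete. Its least positive element `a` is therefore the minimal
distance `σ`, attained at some `w ∈ Λ`. Subtracting a multiple of `w` brings the height of any
point into `[0, a)`, and then a multiple of `v` brings its `v`-coordinate into `[0, 1)`.
-/

open Metric Set Submodule Module RealInnerProductSpace

theorem exists_pos_disjoint_Ioo_of_finite_inter_Ioc {s : Set ℝ} (hs : (s ∩ Ioc 0 1).Finite) :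
    ∃ ε > 0, Disjoint s (Ioo 0 ε) := by
  obtain ⟨ε, hε, hball⟩ := isOpen_iff.mp hs.isClosed.isOpen_compl 0 fun h => h.2.1.false
  refine ⟨min ε 1, lt_min hε one_pos, disjoint_left.mpr fun x hxs hx => ?_⟩
  refine hball ?_ ⟨hxs, hx.1, hx.2.le.trans (min_le_right _ _)⟩
  rw [mem_ball, dist_zero_right, Real.norm_of_nonneg hx.1.le]
  exact hx.2.trans_le (min_le_left _ _)

variable {E : Type*} [NormedAddCommGroup E] [InnerProductSpace ℝ E] {v e : E}

theorem span_pair_eq_of_finrank_eq_two {π : Submodule ℝ E} (hdim : finrank ℝ π = 2)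
    (hv : v ∈ π) (he : e ∈ π) (hv0 : v ≠ 0) (he0 : e ≠ 0) (heo : ⟪e, v⟫ = 0) :
    span ℝ {v, e} = π := by
  have : FiniteDimensional ℝ π := Module.finite_of_finrank_eq_succ hdim
  have hli : LinearIndependent ℝ ![v, e] :=
    linearIndependent_of_ne_zero_of_inner_eq_zero (by simp [Fin.forall_fin_two, hv0, he0])
      (by simp [Pairwise, Fin.forall_fin_two, heo, real_inner_comm e v])
  refine eq_of_le_of_finrank_eq (span_le.mpr (pair_subset hv he)) ?_
  rw [hdim, ← Matrix.range_cons_cons_empty v e ![], finrank_span_eq_card hli, Fintype.card_fin]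

theorem exists_eq_smul_add_inner_smul_of_mem_span_pair (hen : ‖e‖ = 1) (heo : ⟪e, v⟫ = 0)
    {u : E} (hu : u ∈ span ℝ {v, e}) : ∃ x : ℝ, u = x • v + ⟪e, u⟫ • e := by
  obtain ⟨x, b, rfl⟩ := mem_span_pair.mp hu
  refine ⟨x, ?_⟩
  simp [inner_add_right, real_inner_smul_right, heo, hen]

theorem mem_span_singleton_iff_inner_eq_zero (heo : ⟪e, v⟫ = 0) {w : E} {x : ℝ}
    (hw : w = x • v + ⟪e, w⟫ • e) : w ∈ ℝ ∙ v ↔ ⟪e, w⟫ = 0 := by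
  refine ⟨fun hwv => ?_, fun h => mem_span_singleton.mpr ⟨x, by rw [hw, h, zero_smul, add_zero]⟩⟩
  obtain ⟨c, rfl⟩ := mem_span_singleton.mp hwv
  rw [real_inner_smul_right, heo, mul_zero]

theorem infDist_span_singleton_eq_abs_inner (hen : ‖e‖ = 1) (heo : ⟪e, v⟫ = 0) {w : E} {x : ℝ}
    (hw : w = x • v + ⟪e, w⟫ • e) : infDist w (ℝ ∙ v) = |⟪e, w⟫| := by
  refine le_antisymm ?_ ((le_infDist ⟨0, zero_mem _⟩).mpr fun y hy => ?_)
  · calc infDist w (ℝ ∙ v) ≤ dist w (x • v) :=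
          infDist_le_dist_of_mem (smul_mem _ x (mem_span_singleton_self v))
      _ = |⟪e, w⟫| := by
        rw [dist_eq_norm]
        nth_rw 1 [hw]
        rw [add_sub_cancel_left, norm_smul, hen, mul_one, Real.norm_eq_abs]
  · obtain ⟨t, rfl⟩ := mem_span_singleton.mp hy
    calc |⟪e, w⟫| = |⟪e, w - t • v⟫| := by rw [inner_sub_right, real_inner_smul_right, heo]; simp
      _ ≤ ‖e‖ * ‖w - t • v‖ := abs_real_inner_le_norm e _
      _ = dist w (t • v) := by rw [hen, one_mul, dist_eq_norm]

theorem exists_sub_zsmul_add_zsmul_eq (hen : ‖e‖ = 1) (heo : ⟪e, v⟫ = 0) {w : E}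
    (hw : w ∈ span ℝ {v, e}) {a : ℝ} (hwa : ⟪e, w⟫ = a) (ha : 0 < a) {u : E}
    (hu : u ∈ span ℝ {v, e}) :
    ∃ m n : ℤ, ∃ t r : ℝ, t ∈ Ico 0 1 ∧ r ∈ Ico 0 a ∧ u - (m • v + n • w) = t • v + r • e := by
  obtain ⟨x, hx⟩ := exists_eq_smul_add_inner_smul_of_mem_span_pair hen heo hu
  obtain ⟨y, hy⟩ := exists_eq_smul_add_inner_smul_of_mem_span_pair hen heo hw
  set b := ⟪e, u⟫
  rw [hwa] at hy
  obtain ⟨n, hn, -⟩ := existsUnique_sub_zsmul_mem_Ico ha b 0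
  obtain ⟨m, hm, -⟩ := existsUnique_sub_zsmul_mem_Ico one_pos (x - n * y) 0
  rw [zero_add] at hn hm
  refine ⟨m, n, _, _, hm, hn, ?_⟩
  rw [hx, hy]
  simp only [← Int.cast_smul_eq_zsmul ℝ]
  module

noncomputable def innerImage (e : E) (Λ : AddSubgroup E) : AddSubgroup ℝ :=
  Λ.map (innerₛₗ ℝ e).toAddMonoidHom

theorem mem_innerImage {Λ : AddSubgroup E} {s : ℝ} :
    s ∈ innerImage e Λ ↔ ∃ w ∈ Λ, ⟪e, w⟫ = s := by
  simp [innerImage]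

variable {Λ : AddSubgroup E}

theorem finite_innerImage_inter_Ioc [ProperSpace E] (hdisc : DiscreteTopology Λ)
    (hen : ‖e‖ = 1) (heo : ⟪e, v⟫ = 0) (hv : v ∈ Λ) (hΛ : (Λ : Set E) ⊆ span ℝ {v, e}) :
    ((innerImage e Λ : Set ℝ) ∩ Ioc 0 1).Finite := by
  have hfin : (closedBall 0 (‖v‖ + 1) ∩ (Λ : Set E)).Finite :=
    finite_isBounded_inter_isClosed (isDiscrete_iff_discreteTopology.mpr hdisc)
      isBounded_closedBall AddSubgroup.isClosed_of_discrete
  refine (hfin.image fun w => ⟪e, w⟫).subset ?_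
  rintro s ⟨hs, hs0, hs1⟩
  obtain ⟨w, hwΛ, rfl⟩ := mem_innerImage.mp hs
  obtain ⟨x, hx⟩ := exists_eq_smul_add_inner_smul_of_mem_span_pair hen heo (hΛ hwΛ)
  have hred : w - ⌊x⌋ • v = Int.fract x • v + ⟪e, w⟫ • e := by
    rw [Int.fract, sub_smul, ← Int.cast_smul_eq_zsmul ℝ]
    nth_rw 1 [hx]
    abel
  refine ⟨w - ⌊x⌋ • v, ⟨?_, sub_mem hwΛ (zsmul_mem hv _)⟩, ?_⟩
  · rw [mem_closedBall, dist_zero_right, hred]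
    calc ‖Int.fract x • v + ⟪e, w⟫ • e‖ ≤ Int.fract x * ‖v‖ + ⟪e, w⟫ * ‖e‖ := by
          refine (norm_add_le _ _).trans_eq ?_
          rw [norm_smul, norm_smul, Real.norm_of_nonneg (Int.fract_nonneg x),
            Real.norm_of_nonneg hs0.le]
      _ ≤ 1 * ‖v‖ + 1 * 1 := by
          rw [hen]; gcongr; exact (Int.fract_lt_one x).le
      _ = ‖v‖ + 1 := by ring
  · change ⟪e, w - ⌊x⌋ • v⟫ = ⟪e, w⟫
    rw [inner_sub_right, ← Int.cast_smul_eq_zsmul ℝ, real_inner_smul_right, heo, mul_zero,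
      sub_zero]

theorem exists_isLeast_pos_innerImage [ProperSpace E] (hdisc : DiscreteTopology Λ)
    (hen : ‖e‖ = 1) (heo : ⟪e, v⟫ = 0) (hv : v ∈ Λ) (hΛ : (Λ : Set E) ⊆ span ℝ {v, e})
    (hne : ∃ w ∈ Λ, ⟪e, w⟫ ≠ 0) : ∃ a, IsLeast {s | s ∈ innerImage e Λ ∧ 0 < s} a := by
  obtain ⟨w, hwΛ, hw⟩ := hne
  have hbot : innerImage e Λ ≠ ⊥ := fun h => hw <| by
    simpa [h] using (mem_innerImage (e := e)).mpr ⟨w, hwΛ, rfl⟩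
  obtain ⟨ε, hε, hdisj⟩ := exists_pos_disjoint_Ioo_of_finite_inter_Ioc
    (finite_innerImage_inter_Ioc hdisc hen heo hv hΛ)
  exact AddSubgroup.exists_isLeast_pos hbot hε hdisj

theorem sInf_infDist_span_singleton_eq (hen : ‖e‖ = 1) (heo : ⟪e, v⟫ = 0)
    (hΛ : (Λ : Set E) ⊆ span ℝ {v, e}) {a : ℝ}
    (ha : IsLeast {s | s ∈ innerImage e Λ ∧ 0 < s} a) :
    sInf {r | ∃ w ∈ Λ, w ∉ ℝ ∙ v ∧ r = infDist w (ℝ ∙ v)} = a := by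
  have hline : ∀ w ∈ Λ, (w ∈ ℝ ∙ v ↔ ⟪e, w⟫ = 0) ∧ infDist w (ℝ ∙ v) = |⟪e, w⟫| := fun w hw => by
    obtain ⟨x, hx⟩ := exists_eq_smul_add_inner_smul_of_mem_span_pair hen heo (hΛ hw)
    exact ⟨mem_span_singleton_iff_inner_eq_zero heo hx,
      infDist_span_singleton_eq_abs_inner hen heo hx⟩
  refine IsLeast.csInf_eq ⟨?_, ?_⟩
  · obtain ⟨⟨w, hwΛ, hwa⟩, ha0⟩ := And.imp_left mem_innerImage.mp ha.1
    refine ⟨w, hwΛ, ?_, ?_⟩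
    · rw [(hline w hwΛ).1, hwa]; exact ha0.ne'
    · rw [(hline w hwΛ).2, hwa, abs_of_pos ha0]
  · rintro r ⟨w, hwΛ, hwv, rfl⟩
    rw [(hline w hwΛ).1] at hwv
    rw [(hline w hwΛ).2]
    exact ha.2 ⟨abs_mem_iff.mpr (mem_innerImage.mpr ⟨w, hwΛ, rfl⟩), abs_pos.mpr hwv⟩

theorem stmt5 (Λ : AddSubgroup (EuclideanSpace ℝ (Fin 3)))
    (π : Submodule ℝ (EuclideanSpace ℝ (Fin 3)))
    (hdim : Module.finrank ℝ π = 2)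
    (hsub : (Λ : Set (EuclideanSpace ℝ (Fin 3))) ⊆ (π : Set (EuclideanSpace ℝ (Fin 3))))
    (hspan : Submodule.span ℝ (Λ : Set (EuclideanSpace ℝ (Fin 3))) = π)
    (hdisc : DiscreteTopology Λ)
    (v : EuclideanSpace ℝ (Fin 3)) (hv : v ∈ Λ) (hv0 : v ≠ 0)
    (σ : ℝ)
    (hσ : σ = sInf {r : ℝ | ∃ w ∈ Λ, w ∉ Submodule.span ℝ {v} ∧
        r = Metric.infDist w (Submodule.span ℝ {v} : Set (EuclideanSpace ℝ (Fin 3)))})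
    (e : EuclideanSpace ℝ (Fin 3)) (he : e ∈ π) (hen : ‖e‖ = 1)
    (heo : inner ℝ e v = (0 : ℝ))
    (P : Set (EuclideanSpace ℝ (Fin 3)))
    (hPdef : P = {x | ∃ t r : ℝ, 0 ≤ t ∧ t ≤ 1 ∧ |r| ≤ σ ∧ x = t • v + r • e}) :
    (∃ F ⊆ P, ∀ u ∈ π, ∃ g ∈ Λ, u - g ∈ F) ∧
    ∀ ζ ∈ π, ∃ p ∈ Λ, ∃ y ∈ P, p = ζ + y := by
  have hplane : span ℝ {v, e} = π :=
    span_pair_eq_of_finrank_eq_two hdim (hsub hv) he hv0 (norm_ne_zero_iff.mp (by simp [hen])) heo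
  have hΛ : (Λ : Set (EuclideanSpace ℝ (Fin 3))) ⊆ span ℝ {v, e} := hplane ▸ hsub
  have hne : ∃ w ∈ Λ, ⟪e, w⟫ ≠ 0 := by
    by_contra! h
    have hπ : π ≤ LinearMap.ker (innerₛₗ ℝ e) := hspan ▸ span_le.mpr h
    simpa [real_inner_self_eq_norm_sq, hen] using hπ he
  obtain ⟨a, ha⟩ := exists_isLeast_pos_innerImage hdisc hen heo hv hΛ hne
  obtain ⟨⟨w, hwΛ, hwa⟩, ha0⟩ := And.imp_left mem_innerImage.mp ha.1
  have hσa : σ = a := hσ ▸ sInf_infDist_span_singleton_eq hen heo hΛ ha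
  have hcover : ∀ u ∈ π, ∃ g ∈ Λ, u - g ∈ P := fun u hu => by
    obtain ⟨m, n, t, r, ht, hr, hu'⟩ :=
      exists_sub_zsmul_add_zsmul_eq hen heo (hΛ hwΛ) hwa ha0 (hplane ▸ hu)
    refine ⟨m • v + n • w, add_mem (zsmul_mem hv m) (zsmul_mem hwΛ n), hPdef ▸ ?_⟩
    exact ⟨t, r, ht.1, ht.2.le, by rw [abs_of_nonneg hr.1, hσa]; exact hr.2.le, hu'⟩
  refine ⟨⟨P, subset_rfl, hcover⟩, fun ζ hζ => ?_⟩
  obtain ⟨g, hgΛ, hgP⟩ := hcover (-ζ) (neg_mem hζ)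
  exact ⟨-g, neg_mem hgΛ, -ζ - g, hgP, by abel⟩
end
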